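/- The projector |0⟩⟨0|_E tensored with the identity on all other factors acts as the identity on every post-measurement state arising from a state of H₅, and annihilates every post-measurement state arising from a state of H₇. (Step 4 of the proof of Theorem 9: Eve's final two-outcome measurement distinguishes the remaining subsets H₅ and H₇.) -/

import Mathlib

/-!
Every projector involved is diagonal in the computational basis, so the post-measurement state
of `|h⟩` vanishes wherever `|h⟩` does. A state of `H₅` has `|0⟩` on `E`, hence is supported on
`E = 0`, where `|0⟩⟨0|_E` acts as the identity; a state of `H₇` has `|γ_m⟩` on `E`, whose
`|0⟩`-coefficient is zero, hence is supported on `E ≠ 0`, which `|0⟩⟨0|_E` annihilates.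
-/

noncomputable section

/-- View a coefficient function as a vector of the Euclidean (Hilbert) space. -/
def ofFun {ι : Type*} [Fintype ι] (f : ι → ℂ) : EuclideanSpace ℂ ι := WithLp.toLp 2 f

/-- Transport an endomorphism of the coefficient functions to the Euclidean space. -/
def toE {ι : Type*} [Fintype ι] (T : (ι → ℂ) →ₗ[ℂ] (ι → ℂ)) :
    Module.End ℂ (EuclideanSpace ℂ ι) :=
  (WithLp.linearEquiv 2 ℂ (ι → ℂ)).symm.toLinearMap ∘ₗ T ∘ₗ
    (WithLp.linearEquiv 2 ℂ (ι → ℂ)).toLinearMap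

open Classical in
/-- Diagonal orthogonal projection keeping exactly the basis vectors whose index
satisfies `f`. -/
def diagP {ι : Type*} [Fintype ι] (f : ι → Prop) : Module.End ℂ (EuclideanSpace ℂ ι) :=
  toE (LinearMap.pi fun i => (if f i then (1 : ℂ) else 0) • LinearMap.proj i)

/-- Tensor product of two vectors, realized on the product index set. -/
def tensE {ι κ : Type*} [Fintype ι] [Fintype κ]
    (u : EuclideanSpace ℂ ι) (w : EuclideanSpace ℂ κ) : EuclideanSpace ℂ (ι × κ) :=
  ofFun fun p => u p.1 * w p.2

/-- The root of unity `ω_n = e^{2πi/n}`. -/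
def omegaC (n : ℕ) : ℂ := Complex.exp (2 * Real.pi * Complex.I / n)

/-- Computational basis vector `|k⟩` of `ℂ^d`. -/
def ketD (d k : ℕ) : EuclideanSpace ℂ (Fin d) :=
  ofFun fun u => if (u : ℕ) = k then 1 else 0

/-- The (unnormalized) vector `|α_i⟩ = Σ_{u=0}^{d−1} ω_d^{iu}|u⟩`. -/
def alphaD (d i : ℕ) : EuclideanSpace ℂ (Fin d) :=
  ofFun fun u => omegaC d ^ (i * (u : ℕ))

/-- The (unnormalized) vector `|γ_m⟩ = Σ_{u=0}^{d−2} ω_{d−1}^{mu}|u+1⟩`. -/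
def gammaD (d m : ℕ) : EuclideanSpace ℂ (Fin d) :=
  ofFun fun u => if (u : ℕ) = 0 then 0 else omegaC (d - 1) ^ (m * ((u : ℕ) - 1))

/-- Tensor product of five vectors of `ℂ^d`, realized on the index set `Fin 5 → Fin d`. -/
def tp5 {d : ℕ} (v0 v1 v2 v3 v4 : EuclideanSpace ℂ (Fin d)) :
    EuclideanSpace ℂ (Fin 5 → Fin d) :=
  ofFun fun x => v0 (x 0) * v1 (x 1) * v2 (x 2) * v3 (x 3) * v4 (x 4)

/-- The states of set (5): family `k : Fin 10` corresponds to `H_{k+1}`; the parameter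
`a` is the spectral parameter (`i ∈ ℤ_d` for `H₁,…,H₅`, `m ∈ ℤ_{d−1}` for `H₆,…,H₁₀`),
and `p` is the index of the computational basis vector `|p⟩ ∈ {|1⟩,…,|d−1⟩}`. -/
def stateOf (d : ℕ) (k : Fin 10) (a p : ℕ) : EuclideanSpace ℂ (Fin 5 → Fin d) :=
  if k = 0 then tp5 (alphaD d a) (alphaD d a) (ketD d p) (ketD d 0) (ketD d 0)
  else if k = 1 then tp5 (alphaD d a) (ketD d p) (ketD d 0) (ketD d 0) (alphaD d a)
  else if k = 2 then tp5 (ketD d p) (ketD d 0) (ketD d 0) (alphaD d a) (alphaD d a)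
  else if k = 3 then tp5 (ketD d 0) (ketD d 0) (alphaD d a) (alphaD d a) (ketD d p)
  else if k = 4 then tp5 (ketD d 0) (alphaD d a) (alphaD d a) (ketD d p) (ketD d 0)
  else if k = 5 then tp5 (gammaD d a) (ketD d 0) (ketD d p) (ketD d 0) (ketD d 1)
  else if k = 6 then tp5 (ketD d 0) (ketD d p) (ketD d 0) (ketD d 1) (gammaD d a)
  else if k = 7 then tp5 (ketD d p) (ketD d 0) (ketD d 1) (gammaD d a) (ketD d 0)
  else if k = 8 then tp5 (ketD d 0) (ketD d 1) (gammaD d a) (ketD d 0) (ketD d p)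
  else tp5 (ketD d 1) (gammaD d a) (ketD d 0) (ketD d p) (ketD d 0)

/-- Ranges of the parameters of the states of set (5). -/
def validIdx (d : ℕ) (k : Fin 10) (a p : ℕ) : Prop :=
  (if (k : ℕ) < 5 then a < d else a < d - 1) ∧ 1 ≤ p ∧ p < d

/-- The full Hilbert space: five `ℂ^d` subsystems `A,B,C,D,E` (positions `0,…,4`),
ancilla qubits `a,b,c` (first `Fin 3 → Fin 2` factor, attached to `A,B,C`),
ancilla qubits `v₁,v₂,v₃` (second factor, held by Dave),
and ancilla qubits `e₁,e₂,e₃` (third factor, held by Eve). -/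
abbrev W3 (d : ℕ) : Type :=
  EuclideanSpace ℂ
    ((Fin 5 → Fin d) × ((Fin 3 → Fin 2) × (Fin 3 → Fin 2) × (Fin 3 → Fin 2)))

/-- The ancilla state `|G⟩_{av₁e₁} ⊗ |G⟩_{bv₂e₂} ⊗ |G⟩_{cv₃e₃}`, where
`|G⟩ = (|000⟩+|111⟩)/√2`. -/
def ancG : EuclideanSpace ℂ ((Fin 3 → Fin 2) × (Fin 3 → Fin 2) × (Fin 3 → Fin 2)) :=
  ofFun fun q =>
    ∏ k : Fin 3,
      (if q.1 k = q.2.1 k ∧ q.2.1 k = q.2.2 k then (Real.sqrt 2 : ℂ)⁻¹ else 0)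

/-- The measurement projector
`Q_{Xx} = |0⟩⟨0|_X ⊗ |0⟩⟨0|_x + (Σ_{k=1}^{d−1}|k⟩⟨k|_X) ⊗ |1⟩⟨1|_x`
on the main subsystem at position `X` and its ancilla qubit at position `j`. -/
def QprojG (d : ℕ) (X : Fin 5) (j : Fin 3) : Module.End ℂ (W3 d) :=
  diagP fun q => ((q.1 X : ℕ) = 0 ∧ q.2.1 j = 0) ∨ ((q.1 X : ℕ) ≠ 0 ∧ q.2.1 j = 1)

/-- The post-measurement state
`(Q_{Aa}Q_{Bb}Q_{Cc})(|h⟩ ⊗ |G⟩_{av₁e₁} ⊗ |G⟩_{bv₂e₂} ⊗ |G⟩_{cv₃e₃})`. -/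
def postG (d : ℕ) (h : EuclideanSpace ℂ (Fin 5 → Fin d)) : W3 d :=
  (QprojG d 0 0 * QprojG d 1 1 * QprojG d 2 2) (tensE h ancG)

/-- The projector `|0⟩⟨0|_E` tensored with the identity on all other factors. -/
def projE0 (d : ℕ) : Module.End ℂ (W3 d) :=
  diagP fun q => (q.1 4 : ℕ) = 0

section diagP

variable {ι : Type*} [Fintype ι]

open Classical in
lemma diagP_apply (f : ι → Prop) (v : EuclideanSpace ℂ ι) (i : ι) :
    diagP f v i = if f i then v i else 0 := by
  show (if f i then (1 : ℂ) else 0) • v i = _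
  split_ifs <;> simp

lemma diagP_apply_eq_zero (f : ι → Prop) {v : EuclideanSpace ℂ ι}
    {i : ι} (hv : v i = 0) : diagP f v i = 0 := by
  classical
  simp [diagP_apply, hv]

lemma diagP_eq_self {f : ι → Prop} {v : EuclideanSpace ℂ ι}
    (hv : ∀ i, v i ≠ 0 → f i) : diagP f v = v := by
  classical
  ext i
  rw [diagP_apply]
  by_cases hi : v i = 0
  · simp [hi]
  · rw [if_pos (hv i hi)]

lemma diagP_eq_zero {f : ι → Prop} {v : EuclideanSpace ℂ ι}
    (hv : ∀ i, f i → v i = 0) : diagP f v = 0 := by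
  classical
  ext i
  rw [diagP_apply]
  split_ifs with hi
  exacts [hv i hi, rfl]

end diagP

lemma postG_apply_eq_zero {d : ℕ} {h : EuclideanSpace ℂ (Fin 5 → Fin d)} {q}
    (hq : h q.1 = 0) : postG d h q = 0 :=
  diagP_apply_eq_zero _ <| diagP_apply_eq_zero _ <| diagP_apply_eq_zero _ <|
    show h q.1 * ancG q.2 = 0 by rw [hq, zero_mul]

lemma tp5_apply_eq_zero {d : ℕ} {v0 v1 v2 v3 v4 : EuclideanSpace ℂ (Fin d)} {x : Fin 5 → Fin d}
    (hx : v4 (x 4) = 0) : tp5 v0 v1 v2 v3 v4 x = 0 :=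
  show v0 (x 0) * v1 (x 1) * v2 (x 2) * v3 (x 3) * v4 (x 4) = 0 by rw [hx, mul_zero]

lemma ketD_apply_of_ne {d k : ℕ} {u : Fin d} (hu : (u : ℕ) ≠ k) : ketD d k u = 0 :=
  if_neg hu

lemma gammaD_apply_of_eq_zero {d m : ℕ} {u : Fin d} (hu : (u : ℕ) = 0) : gammaD d m u = 0 :=
  if_pos hu

lemma stateOf_four_apply_eq_zero {d a p : ℕ} {x : Fin 5 → Fin d} (hx : (x 4 : ℕ) ≠ 0) :
    stateOf d 4 a p x = 0 :=
  tp5_apply_eq_zero (ketD_apply_of_ne hx)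

lemma stateOf_six_apply_eq_zero {d a p : ℕ} {x : Fin 5 → Fin d} (hx : (x 4 : ℕ) = 0) :
    stateOf d 6 a p x = 0 :=
  tp5_apply_eq_zero (gammaD_apply_of_eq_zero hx)

theorem thm9_step4_eve_final_measurement_general (d : ℕ) :
    (∀ a p, validIdx d 4 a p →
      projE0 d (postG d (stateOf d 4 a p)) = postG d (stateOf d 4 a p)) ∧
    (∀ a p, validIdx d 6 a p →
      projE0 d (postG d (stateOf d 6 a p)) = 0) := by
  refine ⟨fun a p _ => diagP_eq_self fun q hq => ?_, fun a p _ => diagP_eq_zero fun q hq => ?_⟩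
  · by_contra hE
    exact hq (postG_apply_eq_zero (stateOf_four_apply_eq_zero hE))
  · exact postG_apply_eq_zero (stateOf_six_apply_eq_zero hq)

/-- Step 4 of Theorem 9: `|0⟩⟨0|_E ⊗ I` acts as the identity on every
post-measurement state arising from a state of `H₅`, and annihilates every
post-measurement state arising from a state of `H₇`. -/
theorem thm9_step4_eve_final_measurement (d : ℕ) (hd : 3 ≤ d) :
    (∀ a p, validIdx d 4 a p →
      projE0 d (postG d (stateOf d 4 a p)) = postG d (stateOf d 4 a p)) ∧
    (∀ a p, validIdx d 6 a p →
      projE0 d (postG d (stateOf d 6 a p)) = 0) :=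
  thm9_step4_eve_final_measurement_general d
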